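/- arXiv:2108.02586 — 2 statements merged into one kernel-verified Lean document; each statement's English description precedes it below -/
import Mathlib

section
/- For an almost-complex structure A on M and a torsion-free connection ∇, define the integrability form I^∇_A := d^∇A ∧ (A ∧ A) - d^∇A, where the wedges are the natural module actions of polyvector-valued forms on tangent-bundle-valued forms. Then A is integrable if and only if I^∇_A = 0. -/
/-- Covariant derivative of the endomorphism `A`: `(∇_X A) Y`. -/
def covA {V : Type*} [AddCommGroup V] (conn : V → V → V) (A : V → V) (X Y : V) : V :=
  conn X (A Y) - A (conn X Y)

/-- The covariant exterior derivative of `A` viewed as a `TM`-valued 1-form: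
`d^∇A(X,Y) = (∇_X A)Y - (∇_Y A)X`. -/
def dA {V : Type*} [AddCommGroup V] (conn : V → V → V) (A : V → V) (X Y : V) : V :=
  covA conn A X Y - covA conn A Y X

/-- The Nijenhuis tensor of `A`. -/
def nijenhuis {V : Type*} [AddCommGroup V] (lie : V → V → V) (A : V → V) (X Y : V) : V :=
  lie (A X) (A Y) - A (lie (A X) Y + lie X (A Y)) - lie X Y

/-- The curvature of the connection `∇`. -/
def curv {V : Type*} [AddCommGroup V] (lie conn : V → V → V) (X Y Z : V) : V :=
  conn X (conn Y Z) - conn Y (conn X Z) - conn (lie X Y) Z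

/-- The integrability form `I^∇_A = d^∇A ∧ (A ∧ A) - d^∇A`; with the paper's
conventions for the module actions it evaluates as
`I^∇_A(X,Y) = d^∇A(A X, A Y) - d^∇A(X,Y)`. -/
def integrabilityForm {V : Type*} [AddCommGroup V] (conn : V → V → V) (A : V → V)
    (X Y : V) : V :=
  dA conn A (A X) (A Y) - dA conn A X Y

/-- `A` is integrable iff `I^∇_A = 0`. -/
theorem stmt1
    {C V : Type*} [CommRing C] [Algebra ℝ C]
    [AddCommGroup V] [Module ℝ V] [Module C V] [IsScalarTower ℝ C V]
    (lie : V → V → V) (D : V → C → C) (conn : V → V → V) (A : V → V)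
    -- vector fields act on functions as derivations
    (hD_add : ∀ (X : V) (f₁ f₂ : C), D X (f₁ + f₂) = D X f₁ + D X f₂)
    (hD_mul : ∀ (X : V) (f₁ f₂ : C), D X (f₁ * f₂) = f₁ * D X f₂ + f₂ * D X f₁)
    -- `conn` is a connection on the tangent module
    (hconn_add₁ : ∀ X Y Z : V, conn (X + Y) Z = conn X Z + conn Y Z)
    (hconn_smul₁ : ∀ (f : C) (X Y : V), conn (f • X) Y = f • conn X Y)
    (hconn_add₂ : ∀ X Y Z : V, conn X (Y + Z) = conn X Y + conn X Z)
    (hconn_leibniz : ∀ (X : V) (f : C) (Y : V), conn X (f • Y) = D X f • Y + f • conn X Y)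
    -- `A` is an almost-complex structure
    (hA_add : ∀ X Y : V, A (X + Y) = A X + A Y)
    (hA_smul : ∀ (f : C) (X : V), A (f • X) = f • A X)
    (hA_sq : ∀ X : V, A (A X) = -X)
    -- `conn` is torsion-free
    (htf : ∀ X Y : V, conn X Y - conn Y X = lie X Y)
    :
    (∀ X Y : V, nijenhuis lie A X Y = 0) ↔
      (∀ X Y : V, integrabilityForm conn A X Y = 0) := by

  have hA0 : A 0 = 0 := by
    have := hA_add 0 0; simpa using this
  have hA_neg : ∀ X : V, A (-X) = -A X := by
    intro X
    have := hA_add X (-X); simp [hA0] at this; linear_combination (norm := abel) -this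
  have hA_sub : ∀ X Y : V, A (X - Y) = A X - A Y := by
    intro X Y; rw [sub_eq_add_neg, hA_add, hA_neg, sub_eq_add_neg]
  have hc0 : ∀ X : V, conn X 0 = 0 := by
    intro X; have := hconn_add₂ X 0 0; simpa using this
  have hc_neg : ∀ X Y : V, conn X (-Y) = -conn X Y := by
    intro X Y
    have := hconn_add₂ X Y (-Y); simp [hc0] at this; linear_combination (norm := abel) -this
  have key : ∀ X Y : V, integrabilityForm conn A X Y = -A (nijenhuis lie A X Y) := by
    intro X Y
    simp only [integrabilityForm, dA, covA, nijenhuis, ← htf, hA_add, hA_sub, hA_sq, hA_neg,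
      hc_neg]
    abel
  constructor
  · intro h X Y
    rw [key, h X Y, hA0, neg_zero]
  · intro h X Y
    have := key X Y
    rw [h X Y] at this
    have h2 : A (nijenhuis lie A X Y) = 0 := neg_eq_zero.mp this.symm
    have h3 := congrArg A h2
    rw [hA_sq, hA0] at h3
    exact neg_eq_zero.mp h3
end

section
/- If (M, A, g) is an almost-hermitian manifold such that the bilinear form B_A(X,Y) = (∇_X A)Y is skew-symmetric (nearly Kähler) and the Nijenhuis tensor of A expressed via ∇ satisfies the integrability form identity, then A integrable implies ∇A = 0 (Kähler). Equivalently, for a nearly Kähler structure A, the integrability form equals I^∇_A(X,Y) = -4(∇_X A)Y, so A is integrable iff it is Kähler. -/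
/-- for a nearly Kähler structure (`B_A(X,Y) = (∇_X A)Y`
skew-symmetric) on an almost-hermitian manifold with Levi-Civita connection,
the integrability form equals `I^∇_A(X,Y) = -4(∇_X A)Y`; hence `A` is
integrable iff it is Kähler (`∇A = 0`). -/
theorem stmt18
    {C V : Type*} [CommRing C] [Algebra ℝ C]
    [AddCommGroup V] [Module ℝ V] [Module C V] [IsScalarTower ℝ C V]
    (lie : V → V → V) (D : V → C → C) (conn : V → V → V) (A : V → V)
    (g : V → V → C)
    -- vector fields act on functions as derivations
    (hD_add : ∀ (X : V) (f₁ f₂ : C), D X (f₁ + f₂) = D X f₁ + D X f₂)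
    (hD_mul : ∀ (X : V) (f₁ f₂ : C), D X (f₁ * f₂) = f₁ * D X f₂ + f₂ * D X f₁)
    -- `conn` is a connection on the tangent module
    (hconn_add₁ : ∀ X Y Z : V, conn (X + Y) Z = conn X Z + conn Y Z)
    (hconn_smul₁ : ∀ (f : C) (X Y : V), conn (f • X) Y = f • conn X Y)
    (hconn_add₂ : ∀ X Y Z : V, conn X (Y + Z) = conn X Y + conn X Z)
    (hconn_leibniz : ∀ (X : V) (f : C) (Y : V), conn X (f • Y) = D X f • Y + f • conn X Y)
    -- `A` is an almost-complex structure
    (hA_add : ∀ X Y : V, A (X + Y) = A X + A Y)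
    (hA_smul : ∀ (f : C) (X : V), A (f • X) = f • A X)
    (hA_sq : ∀ X : V, A (A X) = -X)
    -- `conn` is torsion-free
    (htf : ∀ X Y : V, conn X Y - conn Y X = lie X Y)
    -- `g` is a (pseudo-)Riemannian metric and `conn` is metric-compatible (Levi-Civita)
    (hg_symm : ∀ X Y : V, g X Y = g Y X)
    (hg_add₁ : ∀ X Y Z : V, g (X + Y) Z = g X Z + g Y Z)
    (hg_smul₁ : ∀ (f : C) (X Y : V), g (f • X) Y = f * g X Y)
    (hg_compat : ∀ X Y Z : V, D X (g Y Z) = g (conn X Y) Z + g Y (conn X Z))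
    -- `A` is orthogonal with respect to `g`
    (hA_orth : ∀ X Y : V, g (A X) (A Y) = g X Y)
    -- `A` is nearly Kähler: `B_A(X,Y) = (∇_X A)Y` is skew-symmetric
    (hNK : ∀ X Y : V, covA conn A X Y = -(covA conn A Y X))
    :
    (∀ X Y : V,
      dA conn A (A X) (A Y) - dA conn A X Y = -((4 : ℝ) • covA conn A X Y)) ∧
    ((∀ X Y : V, nijenhuis lie A X Y = 0) ↔ (∀ X Y : V, covA conn A X Y = 0)) := by
  -- Basic consequences of additivity
  have hA0 : A 0 = 0 := by
    have h := hA_add 0 0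
    rw [add_zero] at h
    nth_rewrite 1 [← add_zero (A 0)] at h
    exact (add_left_cancel h).symm
  have hA_neg : ∀ v : V, A (-v) = -A v := by
    intro v
    have h : A v + A (-v) = 0 := by rw [← hA_add]; simp [hA0]
    exact eq_neg_of_add_eq_zero_right h
  have hA_sub : ∀ u v : V, A (u - v) = A u - A v := by
    intro u v
    rw [sub_eq_add_neg, hA_add, hA_neg, sub_eq_add_neg]
  have hc0 : ∀ X : V, conn X 0 = 0 := by
    intro X
    have h : conn X 0 + 0 = conn X 0 + conn X 0 := by
      rw [add_zero, ← hconn_add₂, add_zero]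
    exact (add_left_cancel h).symm
  have hconn_neg : ∀ X Y : V, conn X (-Y) = -conn X Y := by
    intro X Y
    have h : conn X Y + conn X (-Y) = 0 := by rw [← hconn_add₂]; simp [hc0]
    exact eq_neg_of_add_eq_zero_right h
  -- L1: `(∇_X A)(AY) = -A((∇_X A)Y)` (general)
  have hL1 : ∀ X Y : V, covA conn A X (A Y) = -A (covA conn A X Y) := by
    intro X Y
    simp only [covA, hA_sub, hA_sq, hconn_neg]
    abel
  -- L2: `(∇_{AX} A)Y = -A((∇_X A)Y)` (nearly Kähler)
  have hL2 : ∀ X Y : V, covA conn A (A X) Y = -A (covA conn A X Y) := by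
    intro X Y
    rw [hNK (A X) Y, hL1 Y X, hNK Y X, hA_neg]
    abel
  -- general formula for the Nijenhuis tensor via `∇A`
  have hN : ∀ X Y : V, nijenhuis lie A X Y =
      covA conn A (A X) Y - covA conn A (A Y) X
        + A (covA conn A Y X) - A (covA conn A X Y) := by
    intro X Y
    simp only [nijenhuis, covA, ← htf, hA_add, hA_sub, hA_sq]
    abel
  constructor
  · intro X Y
    have h3 : covA conn A (A X) (A Y) = -covA conn A X Y := by
      rw [hL2 X (A Y), hL1 X Y, hA_neg, hA_sq]
      abel
    have h4 : covA conn A (A Y) (A X) = covA conn A X Y := by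
      rw [hL2 Y (A X), hL1 Y X, hA_neg, hA_sq, hNK Y X]
      abel
    simp only [dA, h3, h4, hNK Y X]
    module
  · constructor
    · intro h X Y
      have hn := h X Y
      rw [hN, hL2 X Y, hL2 Y X, hNK Y X, hA_neg] at hn
      have h4 : (4 : ℝ) • A (covA conn A X Y) = 0 := by
        linear_combination (norm := module) -hn
      have hAB : A (covA conn A X Y) = 0 := by
        rcases smul_eq_zero.mp h4 with h' | h'
        · norm_num at h'
        · exact h'
      have hsq := hA_sq (covA conn A X Y)
      rw [hAB, hA0] at hsq
      exact neg_eq_zero.mp hsq.symm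
    · intro h X Y
      rw [hN, h, h, h, h, hA0]
      abel
end
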